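/- arXiv:2411.13178 — 2 statements merged into one kernel-verified Lean document; each statement's English description precedes it below -/
import Mathlib

section
/- (Matrix Capelli identity for eigenvectors of the Jucys–Murphy matrices.) Let X and D be the N×N matrices of multiplication and differentiation operators on the polynomial ring in variables x_i^j, and set L = XD. Let n ≥ 1 and let e ∈ Mat_N(ℂ)^{⊗n} be a matrix such that j_k e = c_k e for some scalars c_2, …, c_n ∈ ℂ, where j_k = Σ_{i=1}^{k−1} P_{ik}. Then, in Mat_N(ℂ)^{⊗n} ⊗ W_N, one has L_1 (L_2 − c_2) (L_3 − c_3) ⋯ (L_n − c_n) e = X_1 ⋯ X_n D_1 ⋯ D_n e. (Taking e to be a primitive idempotent P_{ii}^λ of ℂ[S_n] acting on (ℂ^N)^{⊗n}, with c_k the contents of the standard tableau (λ,i), recovers the matrix Capelli identity of Okounkov's quantum immanant theory.) -/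
/-!
Write `D_{<m} = D_0 ⋯ D_{m-1}` and `J_m = Σ_{i<m} P_{im}`. Only three kinds of relations are used:
the `D_i` commute with each other, `D_i X_k = X_k D_i + P_{ik}` for `i ≠ k`, and
`P_{ik} A_j = A_{σ j} P_{ik}` for the transposition `σ = (i k)`. Pushing `X_m` to the left through
`D_{<m}` and then absorbing `D_m` gives `X_m D_{<m+1} = D_{<m} (L_m - J_m)`, so by induction
`X_0 ⋯ X_{n-1} D_0 ⋯ D_{n-1} = (L_0 - J_0) ⋯ (L_{n-1} - J_{n-1})`. Since `J_t` commutes with `L_k`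
for `k > t`, the factors `J_t` can then be replaced by their eigenvalues `c_t` on `e`, from right
to left.
-/

open Matrix
open scoped Classical

noncomputable section

/-- The Weyl algebra `W_N`: the algebra of ℂ-linear endomorphisms of the
polynomial ring `ℂ[x_i^j : 1 ≤ i,j ≤ N]`, with variables indexed by pairs `(i,j)`. -/
abbrev Wn (N : ℕ) : Type := Module.End ℂ (MvPolynomial (Fin N × Fin N) ℂ)

/-- The matrix `X = ||x_i^j||` whose `(i,j)` entry is the operator of
multiplication by the variable `x_i^j`. -/
def Xop (N : ℕ) : Matrix (Fin N) (Fin N) (Wn N) := fun i j =>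
  LinearMap.mulLeft ℂ (MvPolynomial.X (i, j))

/-- The matrix `D = ||∂/∂x_j^i||` whose `(i,j)` entry is the partial derivative
operator `∂/∂x_j^i`. -/
def Dop (N : ℕ) : Matrix (Fin N) (Fin N) (Wn N) := fun i j =>
  (MvPolynomial.pderiv (j, i)).toLinearMap

/-- For an `N×N` matrix `A` over `U`, the element `A_i` of
`Mat_N(ℂ)^{⊗n} ⊗ U` (identified with matrices over `U` indexed by `n`-tuples
of indices) acting as `A` in the `i`-th tensor factor (0-based) and as the
identity in all other factors.  (If `i` is out of range it is the identity.) -/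
def tensorEmb {U : Type*} [Ring U] (N n : ℕ) (i : ℕ) (A : Matrix (Fin N) (Fin N) U) :
    Matrix (Fin n → Fin N) (Fin n → Fin N) U := fun a b =>
  if h : i < n then
    if ∀ k : Fin n, (k : ℕ) ≠ i → a k = b k then A (a ⟨i, h⟩) (b ⟨i, h⟩) else 0
  else if a = b then 1 else 0

/-- The permutation matrix `P_{ik} ∈ Mat_N(ℂ)^{⊗n} ⊗ U` exchanging the `i`-th
and `k`-th tensor factors (0-based); for `n = 2` it has matrix elements
`P_{kl}^{mn} = δ_k^n δ_l^m`. -/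
def permM {U : Type*} [Ring U] (N n : ℕ) (i k : ℕ) :
    Matrix (Fin n → Fin N) (Fin n → Fin N) U := fun a b =>
  if h : i < n ∧ k < n then
    if a = b ∘ (Equiv.swap (⟨i, h.1⟩ : Fin n) ⟨k, h.2⟩) then 1 else 0
  else if a = b then 1 else 0

/-- The Jucys–Murphy matrix `j_k = Σ_{i=1}^{k-1} P_{ik}` (here 0-based: the
`k`-th JM matrix is the sum of `P_{ik}` over `i < k`; for `k = 0` it is `0`). -/
def jmM (N n : ℕ) (k : ℕ) : Matrix (Fin n → Fin N) (Fin n → Fin N) ℂ :=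
  ∑ i ∈ Finset.range k, permM N n i k

section CapelliRelations

variable {R : Type*} [Ring R]

theorem prod_range_sub_mul_eq_of_mul_eq_smul {K : Type*} [CommSemiring K] [Algebra K R]
    (a b : ℕ → R) (c : ℕ → K) (n : ℕ) (hcomm : ∀ t k, t < k → k < n → Commute (b t) (a k))
    (e : R) (he : ∀ t < n, b t * e = c t • e) :
    ((List.range n).map fun k => a k - b k).prod * e =
      ((List.range n).map fun k => a k - c k • (1 : R)).prod * e := by
  induction n generalizing e with
  | zero => rfl
  | succ n ih =>
    have hlast : (a n - b n) * e = (a n - c n • (1 : R)) * e := by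
      rw [sub_mul, sub_mul, he n n.lt_succ_self, smul_one_mul]
    simp only [List.range_succ, List.map_append, List.prod_append, List.map_singleton,
      List.prod_singleton, mul_assoc, hlast]
    -- `(a n - c n) e` is again an eigenvector of each `b t`, `t < n`, as `b t` commutes with `a n`.
    refine ih (fun t k htk hk => hcomm t k htk (hk.trans n.lt_succ_self)) _ fun t ht => ?_
    have hbt : Commute (b t) (a n - c n • (1 : R)) :=
      (hcomm t n ht n.lt_succ_self).sub_right ((Commute.one_right _).smul_right _)
    rw [← mul_assoc, hbt.eq, mul_assoc, he t (ht.trans n.lt_succ_self), mul_smul_comm]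

variable (x d : ℕ → R) (p : ℕ → ℕ → R)

theorem prod_range_mul_mul_eq_add_mul_sum {m : ℕ} (hdd : ∀ t < m, Commute (d t) (d m))
    (hdx : ∀ t < m, d t * x m = x m * d t + p t m) (hpd : ∀ t < m, p t m * d m = d t * p t m)
    (hpd_comm : ∀ i t, i < t → t < m → Commute (p i m) (d t)) {t : ℕ} (ht : t ≤ m) :
    ((List.range t).map d).prod * x m * d m =
      x m * ((List.range t).map d).prod * d m +
        ((List.range t).map d).prod * ∑ i ∈ Finset.range t, p i m := by
  induction t with
  | zero => simp
  | succ t ih =>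
    have htm : t < m := ht
    have hJ : Commute (∑ i ∈ Finset.range t, p i m) (d t) :=
      Commute.sum_left _ _ _ fun i hi => hpd_comm i t (Finset.mem_range.1 hi) htm
    rw [List.range_succ, List.map_append, List.prod_append, List.map_singleton,
      List.prod_singleton, Finset.sum_range_succ]
    set Dt := ((List.range t).map d).prod
    set J := ∑ i ∈ Finset.range t, p i m
    calc Dt * d t * x m * d m = Dt * x m * (d t * d m) + Dt * (p t m * d m) := by
          rw [mul_assoc Dt, hdx t htm]; noncomm_ring
      _ = (Dt * x m * d m) * d t + Dt * d t * p t m := by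
          rw [(hdd t htm).eq, hpd t htm]; noncomm_ring
      _ = x m * Dt * (d m * d t) + Dt * (J * d t) + Dt * d t * p t m := by
          rw [ih htm.le]; noncomm_ring
      _ = x m * (Dt * d t) * d m + Dt * d t * (J + p t m) := by
          rw [← (hdd t htm).eq, hJ.eq]; noncomm_ring

theorem prod_range_mul_prod_range_eq_prod_sub_sum {n : ℕ}
    (hdd : ∀ t m, t < m → m < n → Commute (d t) (d m))
    (hdx : ∀ t m, t < m → m < n → d t * x m = x m * d t + p t m)
    (hpd : ∀ t m, t < m → m < n → p t m * d m = d t * p t m)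
    (hpd_comm : ∀ i t m, i < t → t < m → m < n → Commute (p i m) (d t)) :
    ((List.range n).map x).prod * ((List.range n).map d).prod =
      ((List.range n).map fun k => x k * d k - ∑ i ∈ Finset.range k, p i k).prod := by
  suffices ∀ m ≤ n, ((List.range m).map x).prod * ((List.range m).map d).prod =
      ((List.range m).map fun k => x k * d k - ∑ i ∈ Finset.range k, p i k).prod from
    this n le_rfl
  intro m hm
  induction m with
  | zero => simp
  | succ m ih =>
    have hmn : m < n := hm
    have hstep := prod_range_mul_mul_eq_add_mul_sum x d p (fun t ht => hdd t m ht hmn)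
      (fun t ht => hdx t m ht hmn) (fun t ht => hpd t m ht hmn)
      (fun i t hi ht => hpd_comm i t m hi ht hmn) le_rfl
    have hlast : x m * ((List.range m).map d).prod * d m =
        ((List.range m).map d).prod * (x m * d m - ∑ i ∈ Finset.range m, p i m) := by
      rw [mul_sub, ← mul_assoc, hstep]; abel
    simp only [List.range_succ, List.map_append, List.prod_append, List.map_singleton,
      List.prod_singleton]
    rw [← ih hmn.le, mul_assoc _ (x m), ← mul_assoc (x m), hlast]
    noncomm_ring

end CapelliRelations

theorem eq_comp_swap_iff {α β : Type*} [DecidableEq α] {a b : α → β} {I K : α} :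
    a = b ∘ Equiv.swap I K ↔ (∀ j, j ≠ I → j ≠ K → a j = b j) ∧ a I = b K ∧ a K = b I := by
  constructor
  · rintro rfl
    exact ⟨fun j hI hK => by simp [Equiv.swap_apply_of_ne_of_ne hI hK], by simp, by simp⟩
  · rintro ⟨h, hI, hK⟩
    funext j
    by_cases hjI : j = I
    · simp [hjI, hI]
    by_cases hjK : j = K
    · simp [hjK, hK]
    simp [Equiv.swap_apply_of_ne_of_ne hjI hjK, h j hjI hjK]

section TensorEmbedding

variable {N n : ℕ} {U : Type*} [Ring U]

theorem tensorEmb_apply (I : Fin n) (A : Matrix (Fin N) (Fin N) U) (a b : Fin n → Fin N) :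
    tensorEmb N n I A a b = if ∀ k, k ≠ I → a k = b k then A (a I) (b I) else 0 := by
  simp only [tensorEmb, dif_pos I.isLt, Fin.eta, Fin.val_ne_iff]

theorem permM_apply (I K : Fin n) (a b : Fin n → Fin N) :
    (permM N n I K : Matrix (Fin n → Fin N) (Fin n → Fin N) U) a b =
      if a = b ∘ Equiv.swap I K then 1 else 0 := by
  simp only [permM, dif_pos (And.intro I.isLt K.isLt), Fin.eta]

theorem tensorEmb_mul_apply (I : Fin n) (A : Matrix (Fin N) (Fin N) U)
    (M : Matrix (Fin n → Fin N) (Fin n → Fin N) U) (a b : Fin n → Fin N) :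
    (tensorEmb N n I A * M) a b = ∑ t, A (a I) t * M (Function.update a I t) b := by
  rw [Matrix.mul_apply, ← Finset.sum_fiberwise Finset.univ (fun w => w I)]
  refine Finset.sum_congr rfl fun t _ => ?_
  rw [Finset.sum_eq_single_of_mem (Function.update a I t) (by simp)]
  · rw [tensorEmb_apply, if_pos fun k hk => (Function.update_of_ne hk _ _).symm,
      Function.update_self]
  · intro w hw hne
    rw [tensorEmb_apply, if_neg, zero_mul]
    intro hcond
    exact hne (Function.eq_update_iff.2 ⟨(Finset.mem_filter.1 hw).2, fun k hk => (hcond k hk).symm⟩)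

theorem tensorEmb_mul_tensorEmb (I : Fin n) (A B : Matrix (Fin N) (Fin N) U) :
    tensorEmb N n I A * tensorEmb N n I B = tensorEmb N n I (A * B) := by
  ext a b
  have hcond : ∀ t, (∀ k, k ≠ I → Function.update a I t k = b k) ↔ ∀ k, k ≠ I → a k = b k :=
    fun t => forall₂_congr fun k hk => by rw [Function.update_of_ne hk]
  simp only [tensorEmb_mul_apply, tensorEmb_apply, hcond, Function.update_self]
  split_ifs
  · rfl
  · simp

theorem tensorEmb_mul_tensorEmb_apply_of_ne {I K : Fin n} (hIK : I ≠ K)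
    (A B : Matrix (Fin N) (Fin N) U) (a b : Fin n → Fin N) :
    (tensorEmb N n I A * tensorEmb N n K B) a b =
      if ∀ j, j ≠ I → j ≠ K → a j = b j then A (a I) (b I) * B (a K) (b K) else 0 := by
  have hcond : ∀ t, (∀ k, k ≠ K → Function.update a I t k = b k) ↔
      t = b I ∧ ∀ j, j ≠ I → j ≠ K → a j = b j := by
    intro t
    constructor
    · intro h
      exact ⟨by simpa using h I hIK, fun j hjI hjK => by simpa [hjI] using h j hjK⟩
    · rintro ⟨rfl, h⟩ k hk
      by_cases hkI : k = I
      · subst hkI; simp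
      · simpa [hkI] using h k hkI hk
  simp only [tensorEmb_mul_apply, tensorEmb_apply, hcond, Function.update_of_ne hIK.symm,
    ite_and, mul_ite, mul_zero, Finset.sum_ite_eq', Finset.mem_univ, if_true]

theorem commute_tensorEmb_of_ne {I K : Fin n} (hIK : I ≠ K) {A B : Matrix (Fin N) (Fin N) U}
    (h : ∀ p q r s, Commute (A p q) (B r s)) :
    Commute (tensorEmb N n I A) (tensorEmb N n K B) := by
  ext a b
  rw [tensorEmb_mul_tensorEmb_apply_of_ne hIK, tensorEmb_mul_tensorEmb_apply_of_ne hIK.symm]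
  simp only [(h _ _ _ _).eq]
  exact if_congr (forall_congr' fun j => forall_comm) rfl rfl

theorem permM_mul_apply (I K : Fin n) (M : Matrix (Fin n → Fin N) (Fin n → Fin N) U)
    (a b : Fin n → Fin N) :
    ((permM N n I K : Matrix (Fin n → Fin N) (Fin n → Fin N) U) * M) a b =
      M (a ∘ Equiv.swap I K) b := by
  rw [Matrix.mul_apply, Finset.sum_eq_single_of_mem (a ∘ Equiv.swap I K) (Finset.mem_univ _)]
  · simp [permM_apply, Function.comp_def]
  · intro w _ hw
    rw [permM_apply, if_neg, zero_mul]
    rintro rfl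
    simp [Function.comp_def] at hw

theorem mul_permM_apply (I K : Fin n) (M : Matrix (Fin n → Fin N) (Fin n → Fin N) U)
    (a b : Fin n → Fin N) :
    (M * (permM N n I K : Matrix (Fin n → Fin N) (Fin n → Fin N) U)) a b =
      M a (b ∘ Equiv.swap I K) := by
  rw [Matrix.mul_apply, Finset.sum_eq_single_of_mem (b ∘ Equiv.swap I K) (Finset.mem_univ _)]
  · simp [permM_apply]
  · intro w _ hw
    rw [permM_apply, if_neg hw, mul_zero]

theorem permM_mul_tensorEmb (I K J : Fin n) (A : Matrix (Fin N) (Fin N) U) :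
    permM N n I K * tensorEmb N n J A =
      tensorEmb N n (Equiv.swap I K J) A * permM N n I K := by
  ext a b
  rw [permM_mul_apply, mul_permM_apply, tensorEmb_apply, tensorEmb_apply]
  refine if_congr ?_ (by simp) rfl
  exact (Equiv.swap I K).forall_congr fun k => by simp

theorem commute_permM_tensorEmb {I K J : Fin n} (hJI : J ≠ I) (hJK : J ≠ K)
    (A : Matrix (Fin N) (Fin N) U) : Commute (permM N n I K) (tensorEmb N n J A) := by
  have h := permM_mul_tensorEmb I K J A
  rwa [Equiv.swap_apply_of_ne_of_ne hJI hJK] at h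

theorem permM_mul_tensorEmb_right (I K : Fin n) (A : Matrix (Fin N) (Fin N) U) :
    permM N n I K * tensorEmb N n K A = tensorEmb N n I A * permM N n I K := by
  rw [permM_mul_tensorEmb, Equiv.swap_apply_right]

end TensorEmbedding

section Weyl

open MvPolynomial

theorem commute_Dop_Dop {N : ℕ} (p q r s : Fin N) : Commute (Dop N p q) (Dop N r s) := by
  have h : ⁅pderiv (q, p), pderiv (s, r)⁆ = (0 : Derivation ℂ (MvPolynomial (Fin N × Fin N) ℂ) _) :=
    derivation_ext fun i => by
      rw [Derivation.commutator_apply]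
      simp [pderiv_X, Pi.single_apply, apply_ite]
  refine LinearMap.ext fun f => sub_eq_zero.1 ?_
  simpa [Dop, Derivation.commutator_apply] using DFunLike.congr_fun h f

theorem Dop_mul_Xop {N : ℕ} (p q r s : Fin N) :
    Dop N p q * Xop N r s = Xop N r s * Dop N p q + if (q, p) = (r, s) then 1 else 0 := by
  refine LinearMap.ext fun f => ?_
  split_ifs with h
  · simp [Dop, Xop, h, add_comm]
  · simp [Dop, Xop, pderiv_X_of_ne (Ne.symm h)]

end Weyl

theorem tensorEmb_Dop_mul_tensorEmb_Xop {N n : ℕ} {I K : Fin n} (hIK : I ≠ K) :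
    tensorEmb N n I (Dop N) * tensorEmb N n K (Xop N) =
      tensorEmb N n K (Xop N) * tensorEmb N n I (Dop N) + permM N n I K := by
  refine Matrix.ext fun a b => ?_
  rw [Matrix.add_apply, tensorEmb_mul_tensorEmb_apply_of_ne hIK,
    tensorEmb_mul_tensorEmb_apply_of_ne hIK.symm, permM_apply, Dop_mul_Xop]
  simp only [eq_comp_swap_iff]
  by_cases hC : ∀ j, j ≠ I → j ≠ K → a j = b j
  · rw [if_pos hC, if_pos fun j hK hI => hC j hI hK]
    exact congrArg _ (if_congr (by rw [Prod.ext_iff, eq_comm (a := b I)]; tauto) rfl rfl)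
  · rw [if_neg hC, if_neg fun h => hC fun j hI hK => h j hK hI, if_neg fun h => hC h.1, add_zero]

theorem permM_map {N n : ℕ} {R S : Type*} [Ring R] [Ring S] (f : R →+* S) (i k : ℕ) :
    (permM N n i k : Matrix (Fin n → Fin N) (Fin n → Fin N) R).map f = permM N n i k := by
  ext a b
  simp only [Matrix.map_apply, permM]
  split_ifs <;> simp

theorem jmM_map {N n : ℕ} {S : Type*} [Ring S] (f : ℂ →+* S) (k : ℕ) :
    (jmM N n k).map f = ∑ i ∈ Finset.range k, permM N n i k := by
  simp only [jmM, ← permM_map f]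
  ext a b
  simp [Matrix.sum_apply]

theorem prod_tensorEmb_Xop_mul_prod_tensorEmb_Dop (N n : ℕ) :
    ((List.range n).map fun k => tensorEmb N n k (Xop N)).prod *
        ((List.range n).map fun k => tensorEmb N n k (Dop N)).prod =
      ((List.range n).map fun k => tensorEmb N n k (Xop N) * tensorEmb N n k (Dop N) -
        ∑ i ∈ Finset.range k, permM N n i k).prod := by
  refine prod_range_mul_prod_range_eq_prod_sub_sum _ _ _ (fun t m htm hm => ?_)
    (fun t m htm hm => ?_) (fun t m htm hm => ?_) (fun i t m hit htm hm => ?_)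
  · exact commute_tensorEmb_of_ne (I := ⟨t, htm.trans hm⟩) (K := ⟨m, hm⟩)
      (Fin.ne_of_val_ne htm.ne) fun _ _ _ _ => commute_Dop_Dop _ _ _ _
  · exact tensorEmb_Dop_mul_tensorEmb_Xop (I := ⟨t, htm.trans hm⟩) (K := ⟨m, hm⟩)
      (Fin.ne_of_val_ne htm.ne)
  · exact permM_mul_tensorEmb_right ⟨t, htm.trans hm⟩ ⟨m, hm⟩ _
  · exact commute_permM_tensorEmb (I := ⟨i, (hit.trans htm).trans hm⟩) (K := ⟨m, hm⟩)
      (J := ⟨t, htm.trans hm⟩) (Fin.ne_of_val_ne hit.ne') (Fin.ne_of_val_ne htm.ne) _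

theorem matrix_Capelli_eigenvector_general (N : ℕ) (n : ℕ)
    (e : Matrix (Fin n → Fin N) (Fin n → Fin N) ℂ) (c : ℕ → ℂ)
    (he : ∀ k, k < n → jmM N n k * e = c k • e) :
    ((List.range n).map (fun k =>
        tensorEmb N n k (Xop N * Dop N) -
          c k • (1 : Matrix (Fin n → Fin N) (Fin n → Fin N) (Wn N)))).prod *
        e.map (algebraMap ℂ (Wn N)) =
    ((List.range n).map (fun k => tensorEmb N n k (Xop N))).prod *
      ((List.range n).map (fun k => tensorEmb N n k (Dop N))).prod *
        e.map (algebraMap ℂ (Wn N)) := by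
  have hJ := jmM_map (N := N) (n := n) (algebraMap ℂ (Wn N))
  rw [← prod_range_sub_mul_eq_of_mul_eq_smul _ (fun k => (jmM N n k).map (algebraMap ℂ (Wn N)))
    c n ?_ _ ?_, prod_tensorEmb_Xop_mul_prod_tensorEmb_Dop]
  · simp only [hJ]
    congr 2
    refine List.map_congr_left fun k hk => ?_
    rw [tensorEmb_mul_tensorEmb ⟨k, List.mem_range.1 hk⟩]
  · intro t k htk hk
    rw [hJ]
    refine Commute.sum_left _ _ _ fun i hi => ?_
    have hit := Finset.mem_range.1 hi
    exact commute_permM_tensorEmb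
      (I := ⟨i, (hit.trans htk).trans hk⟩) (K := ⟨t, htk.trans hk⟩) (J := ⟨k, hk⟩)
      (Fin.ne_of_val_ne (hit.trans htk).ne') (Fin.ne_of_val_ne htk.ne') _
  · intro t ht
    rw [← Matrix.map_mul, he t ht, Matrix.map_smul _ _ fun a => by simp [Algebra.smul_def]]

/-- matrix Capelli identity for eigenvectors of the JM matrices:
if `e ∈ Mat_N(ℂ)^{⊗n}` satisfies `j_k e = c_k e` (with `c₁ = 0`, matching
`j₁ = 0`), then `L₁(L₂ − c₂)⋯(Lₙ − cₙ) e = X₁⋯Xₙ D₁⋯Dₙ e` in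
`Mat_N(ℂ)^{⊗n} ⊗ W_N`, where `L = XD` and scalars act as scalar matrices. -/
theorem matrix_Capelli_eigenvector (N : ℕ) (hN : 1 ≤ N) (n : ℕ) (hn : 1 ≤ n)
    (e : Matrix (Fin n → Fin N) (Fin n → Fin N) ℂ) (c : ℕ → ℂ) (hc0 : c 0 = 0)
    (he : ∀ k, k < n → jmM N n k * e = c k • e) :
    ((List.range n).map (fun k =>
        tensorEmb N n k (Xop N * Dop N) -
          c k • (1 : Matrix (Fin n → Fin N) (Fin n → Fin N) (Wn N)))).prod *
        e.map (algebraMap ℂ (Wn N)) =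
    ((List.range n).map (fun k => tensorEmb N n k (Xop N))).prod *
      ((List.range n).map (fun k => tensorEmb N n k (Dop N))).prod *
        e.map (algebraMap ℂ (Wn N)) :=
  matrix_Capelli_eigenvector_general N n e c he
end
end

section
/- (Universal quantum matrix Capelli identity.) Let q ∈ ℂ satisfy q^k ≠ 1 for all integers k ≥ 1 (in particular q ≠ 0, ±1), and let R ∈ Mat_N(ℂ) ⊗ Mat_N(ℂ) be a skew-invertible Hecke R-matrix: R satisfies the braid relation R_1R_2R_1 = R_2R_1R_2, the Hecke condition R^2 = 1 + (q − q^{−1})R, and there exists Ψ ∈ Mat_N(ℂ) ⊗ Mat_N(ℂ) with Tr_{(2)}(R_{12}Ψ_{23}) = P_{13} = Tr_{(2)}(Ψ_{12}R_{23}). Let W be a unital associative ℂ-algebra containing N×N matrices M and D of elements satisfying R_1 M_1 R_1 M_1 = M_1 R_1 M_1 R_1, R_1^{−1} D_1 R_1^{−1} D_1 = D_1 R_1^{−1} D_1 R_1^{−1}, and D_1 M_{2̄} = R_1^{−1} + M_{2̄} D_1 R_1^{−2}, where M_{2̄} = R_1 M_1 R_1^{−1}; set L̂ = MD. Then for every integer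 n ≥ 1, in Mat_N(ℂ)^{⊗n} ⊗ W: L̂_{1̄} ( L̂_{2̄} + (J_2^{−1} − 1)/(q − q^{−1}) ) ⋯ ( L̂_{n̄} + (J_n^{−1} − 1)/(q − q^{−1}) ) = M_{1̄} M_{2̄} ⋯ M_{n̄} D_{n̄} ⋯ D_{2̄} D_{1̄} J_1^{−1} J_2^{−1} ⋯ J_n^{−1}, where J_1 = 1 and J_k = R_{k−1} ⋯ R_2 R_1^2 R_2 ⋯ R_{k−1} are the quantum Jucys–Murphy matrices. -/
/-!
Levels are counted from `0`, and `A_k` stands for the paper's `A_{k̄}`. Write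
`F_k = L̂_k + (J_k⁻¹ - 1)/(q - q⁻¹)` and `Δ_m = D_{m-1} ⋯ D_0`. The heart of the proof is the
identity `Δ_m F_m = M_m D_m Δ_m J_m⁻¹`, by induction on `m`. Since the Hecke relation gives
`R - R⁻¹ = q - q⁻¹`, the next factor is `F_{m+1} = R_m F_m R_m⁻¹ - J_m⁻¹ R_m⁻¹`; inserting the
induction hypothesis, the cross relation and the reflection equation for `D` at level `m` yields
the identity at level `m + 1`. The relations at level `m` follow from those at level `0`, because
conjugation by `R_m R_{m+1}` raises `A_m`, `A_{m+1}` and `R_m` by one level (braid relation).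
Finally each `J_k⁻¹` with `k < m` commutes with `F_m` and with `J_m⁻¹`, so the Jucys–Murphy
factors collect on the right.
-/

open Matrix
open scoped Classical

noncomputable section

/-- For a matrix `R ∈ Mat_N ⊗ Mat_N` over `U` (indexed by pairs), the element
`R_i` of `Mat_N^{⊗n} ⊗ U` acting as `R` in the `i`-th and `(i+1)`-th tensor
factors (0-based) and as the identity elsewhere.  (If out of range it is the
identity.) -/
def embR {U : Type*} [Ring U] (N n : ℕ)
    (R : Matrix (Fin N × Fin N) (Fin N × Fin N) U) (i : ℕ) :
    Matrix (Fin n → Fin N) (Fin n → Fin N) U := fun a b =>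
  if h : i + 1 < n then
    if ∀ k : Fin n, (k : ℕ) ≠ i → (k : ℕ) ≠ i + 1 → a k = b k then
      R (a ⟨i, Nat.lt_of_succ_lt h⟩, a ⟨i + 1, h⟩)
        (b ⟨i, Nat.lt_of_succ_lt h⟩, b ⟨i + 1, h⟩)
    else 0
  else if a = b then 1 else 0

/-- `A_{k̄} = R_{k−1}⋯R_1 A_1 R_1^{−1}⋯R_{k−1}^{−1}` (0-based: `Abar 0 = A_1`,
`Abar (k+1) = R_{k} · Abar k · R_{k}^{−1}` with 0-based `R`-positions). -/
def Abar (N n : ℕ) {W : Type*} [Ring W]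
    (RW RWi : Matrix (Fin N × Fin N) (Fin N × Fin N) W)
    (A : Matrix (Fin N) (Fin N) W) :
    ℕ → Matrix (Fin n → Fin N) (Fin n → Fin N) W
  | 0 => tensorEmb N n 0 A
  | k + 1 => embR N n RW k * Abar N n RW RWi A k * embR N n RWi k

/-- The quantum Jucys–Murphy matrices (0-based): `J 0 = 1` and
`J (k+1) = R_k · J k · R_k`, i.e. `J_k = R_{k−1}⋯R_2 R_1² R_2⋯R_{k−1}`
in 1-based notation. -/
def Jm (N n : ℕ) (R : Matrix (Fin N × Fin N) (Fin N × Fin N) ℂ) :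
    ℕ → Matrix (Fin n → Fin N) (Fin n → Fin N) ℂ
  | 0 => 1
  | k + 1 => embR N n R k * Jm N n R k * embR N n R k

/-- Partial trace `Tr_{(2)}` over the middle tensor component of an element of
`Mat_N(ℂ)^{⊗3}`, landing in `Mat_N(ℂ) ⊗ Mat_N(ℂ)` (factors 1 and 3). -/
def ptr2 (N : ℕ) (A : Matrix (Fin 3 → Fin N) (Fin 3 → Fin N) ℂ) :
    Matrix (Fin N × Fin N) (Fin N × Fin N) ℂ := fun p r =>
  ∑ m : Fin N, A ![p.1, m, p.2] ![r.1, m, r.2]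

/-- The permutation matrix `P₁₃ ∈ Mat_N(ℂ) ⊗ Mat_N(ℂ)` (viewed in factors 1
and 3), exchanging the two factors. -/
def swap13 (N : ℕ) : Matrix (Fin N × Fin N) (Fin N × Fin N) ℂ := fun p r =>
  if p.1 = r.2 ∧ p.2 = r.1 then 1 else 0

section Place

variable {U : Type*} [Ring U] {N m n : ℕ}

theorem eq_of_comp_eq_of_eq_off_range {α β X : Type*} {ρ : β → α} {c d : α → X}
    (hρ : c ∘ ρ = d ∘ ρ) (hoff : ∀ k ∉ Set.range ρ, c k = d k) : c = d := by
  funext k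
  by_cases hk : k ∈ Set.range ρ
  · obtain ⟨j, rfl⟩ := hk
    exact congrFun hρ j
  · exact hoff k hk

theorem Fintype.sum_eq_sum_extend {α β X γ : Type*} [Fintype (α → X)] [Fintype (β → X)]
    [AddCommMonoid γ] {ρ : β → α} (hρ : Function.Injective ρ) (a : α → X)
    (f : (α → X) → γ) (hf : ∀ c, ¬ (∀ k ∉ Set.range ρ, a k = c k) → f c = 0) :
    ∑ c, f c = ∑ d : β → X, f (Function.extend ρ d a) := by
  rw [← Finset.sum_image fun d _ d' _ h => Function.extend_injective hρ a h]
  refine (Finset.sum_subset (Finset.subset_univ _) fun c _ hc => hf c fun hac => hc ?_).symm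
  refine Finset.mem_image.2 ⟨c ∘ ρ, Finset.mem_univ _, eq_of_comp_eq_of_eq_off_range
    (Function.extend_comp hρ _ _) fun k hk => by rw [Function.extend_apply' _ _ _ hk, hac k hk]⟩

/-- `place ρ X` acts as `X` on the tensor legs selected by `ρ` and as the identity on the
other legs. -/
def place (ρ : Fin m → Fin n) (X : Matrix (Fin m → Fin N) (Fin m → Fin N) U) :
    Matrix (Fin n → Fin N) (Fin n → Fin N) U := fun a b =>
  if ∀ k ∉ Set.range ρ, a k = b k then X (a ∘ ρ) (b ∘ ρ) else 0

theorem eq_extend_of_notMem_range {ρ : Fin m → Fin n} (d : Fin m → Fin N) (a : Fin n → Fin N) :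
    ∀ k ∉ Set.range ρ, a k = Function.extend ρ d a k :=
  fun _ hk => (Function.extend_apply' _ _ _ hk).symm

theorem place_mul {ρ : Fin m → Fin n} (hρ : Function.Injective ρ)
    (X Y : Matrix (Fin m → Fin N) (Fin m → Fin N) U) :
    place ρ X * place ρ Y = place ρ (X * Y) := by
  ext a b
  rw [Matrix.mul_apply, Fintype.sum_eq_sum_extend hρ a _ fun c hc => by
    simp only [place, if_neg hc, zero_mul]]
  have hagree (d : Fin m → Fin N) : (∀ k ∉ Set.range ρ, Function.extend ρ d a k = b k) ↔
      ∀ k ∉ Set.range ρ, a k = b k :=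
    forall₂_congr fun k hk => by rw [← eq_extend_of_notMem_range d a k hk]
  simp only [place, Function.extend_comp hρ, if_pos (eq_extend_of_notMem_range _ a), hagree]
  split_ifs <;> simp [Matrix.mul_apply]

theorem place_one (ρ : Fin m → Fin n) :
    place ρ (1 : Matrix (Fin m → Fin N) (Fin m → Fin N) U) = 1 := by
  ext a b
  simp only [place, Matrix.one_apply]
  by_cases hab : a = b
  · subst hab
    simp
  rw [if_neg hab]
  split_ifs with hoff hon
  · exact absurd (eq_of_comp_eq_of_eq_off_range hon hoff) hab
  all_goals rfl

theorem place_add (ρ : Fin m → Fin n) (X Y : Matrix (Fin m → Fin N) (Fin m → Fin N) U) :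
    place ρ (X + Y) = place ρ X + place ρ Y := by
  ext a b
  simp only [place, Matrix.add_apply]
  split_ifs <;> simp

def placeHom {ρ : Fin m → Fin n} (hρ : Function.Injective ρ) :
    Matrix (Fin m → Fin N) (Fin m → Fin N) U →+* Matrix (Fin n → Fin N) (Fin n → Fin N) U :=
  RingHom.mk' ⟨⟨place ρ, place_one ρ⟩, fun X Y => (place_mul hρ X Y).symm⟩ (place_add ρ)

theorem placeHom_apply {ρ : Fin m → Fin n} (hρ : Function.Injective ρ)
    (X : Matrix (Fin m → Fin N) (Fin m → Fin N) U) : placeHom hρ X = place ρ X :=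
  rfl

theorem place_place {m' : ℕ} {ρ : Fin m → Fin n} (hρ : Function.Injective ρ) (σ : Fin m' → Fin m)
    (X : Matrix (Fin m' → Fin N) (Fin m' → Fin N) U) :
    place ρ (place σ X) = place (ρ ∘ σ) X := by
  ext a b
  have hoff : (∀ k ∉ Set.range (ρ ∘ σ), a k = b k) ↔
      (∀ k ∉ Set.range ρ, a k = b k) ∧ ∀ k ∉ Set.range σ, (a ∘ ρ) k = (b ∘ ρ) k := by
    refine ⟨fun h => ⟨fun k hk => h k fun hk' => hk (Set.range_comp_subset_range σ ρ hk'),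
      fun k hk => h (ρ k) ?_⟩, fun ⟨h, h'⟩ k hk => ?_⟩
    · rintro ⟨j, hj⟩
      exact hk ⟨j, hρ hj⟩
    · by_cases hkρ : k ∈ Set.range ρ
      · obtain ⟨j, rfl⟩ := hkρ
        exact h' j fun ⟨i, hi⟩ => hk ⟨i, by simp [hi]⟩
      · exact h k hkρ
  simp only [place, hoff, ite_and]
  rfl

theorem place_mul_place_apply_of_disjoint {m' : ℕ} {ρ : Fin m → Fin n} {ρ' : Fin m' → Fin n}
    (hρ : Function.Injective ρ) (hdisj : Disjoint (Set.range ρ) (Set.range ρ'))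
    (X : Matrix (Fin m → Fin N) (Fin m → Fin N) U)
    (Y : Matrix (Fin m' → Fin N) (Fin m' → Fin N) U) (a b : Fin n → Fin N) :
    (place ρ X * place ρ' Y) a b =
      if ∀ k ∉ Set.range ρ, k ∉ Set.range ρ' → a k = b k then
        X (a ∘ ρ) (b ∘ ρ) * Y (a ∘ ρ') (b ∘ ρ') else 0 := by
  rw [Matrix.mul_apply, Fintype.sum_eq_sum_extend hρ a _ fun c hc => by
    simp only [place, if_neg hc, zero_mul]]
  have hρ' (d : Fin m → Fin N) : Function.extend ρ d a ∘ ρ' = a ∘ ρ' :=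
    funext fun j => Function.extend_apply' _ _ _ fun hj => hdisj.ne_of_mem hj ⟨j, rfl⟩ rfl
  have hoff (d : Fin m → Fin N) : (∀ k ∉ Set.range ρ', Function.extend ρ d a k = b k) ↔
      d = b ∘ ρ ∧ ∀ k ∉ Set.range ρ, k ∉ Set.range ρ' → a k = b k := by
    constructor
    · intro h
      refine ⟨funext fun j => ?_, fun k hk hk' => ?_⟩
      · simpa [hρ.extend_apply] using h (ρ j) fun hj => hdisj.ne_of_mem ⟨j, rfl⟩ hj rfl
      · rw [← h k hk', Function.extend_apply' _ _ _ hk]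
    · rintro ⟨rfl, h⟩ k hk'
      by_cases hk : k ∈ Set.range ρ
      · obtain ⟨j, rfl⟩ := hk
        exact hρ.extend_apply _ _ j
      · rw [Function.extend_apply' _ _ _ hk, h k hk hk']
  simp only [place, Function.extend_comp hρ, if_pos (eq_extend_of_notMem_range _ a), hρ', hoff,
    ite_and, mul_ite, mul_zero, Finset.sum_ite_eq', Finset.mem_univ, if_true]

theorem commute_place_of_disjoint {m' : ℕ} {ρ : Fin m → Fin n} {ρ' : Fin m' → Fin n}
    (hρ : Function.Injective ρ) (hρ' : Function.Injective ρ')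
    (hdisj : Disjoint (Set.range ρ) (Set.range ρ'))
    (X : Matrix (Fin m → Fin N) (Fin m → Fin N) U)
    (Y : Matrix (Fin m' → Fin N) (Fin m' → Fin N) U)
    (hXY : ∀ p q p' q', Commute (X p q) (Y p' q')) :
    Commute (place ρ X) (place ρ' Y) := by
  refine Matrix.ext fun a b => ?_
  rw [place_mul_place_apply_of_disjoint hρ hdisj, place_mul_place_apply_of_disjoint hρ' hdisj.symm]
  by_cases h : ∀ k ∉ Set.range ρ, k ∉ Set.range ρ' → a k = b k
  · rw [if_pos h, if_pos fun k hk' hk => h k hk hk', (hXY _ _ _ _).eq]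
  · rw [if_neg h, if_neg fun h' => h fun k hk hk' => h' k hk' hk]

def legShift (i : ℕ) (h : i + m ≤ n) : Fin m → Fin n := fun j => ⟨i + j, by omega⟩

theorem legShift_injective {i : ℕ} (h : i + m ≤ n) : Function.Injective (legShift i h) :=
  fun j j' hjj' => Fin.ext (by simpa [legShift] using hjj')

theorem mem_range_legShift {i : ℕ} (h : i + m ≤ n) (k : Fin n) :
    k ∈ Set.range (legShift i h) ↔ i ≤ k ∧ (k : ℕ) < i + m := by
  refine ⟨?_, fun hk => ⟨⟨k - i, by omega⟩, Fin.ext (by simp only [legShift]; omega)⟩⟩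
  rintro ⟨j, rfl⟩
  simp [legShift]

theorem legShift_comp {i j m' : ℕ} (h : i + m ≤ n) (h' : j + m' ≤ m) :
    legShift i h ∘ legShift j h' = legShift (i + j) (by omega) :=
  funext fun k => Fin.ext (by simp only [Function.comp_apply, legShift]; omega)

theorem disjoint_range_legShift {m' i j : ℕ} (h : i + m ≤ n) (h' : j + m' ≤ n)
    (hij : i + m ≤ j ∨ j + m' ≤ i) :
    Disjoint (Set.range (legShift i h)) (Set.range (legShift j h')) :=
  Set.disjoint_left.2 fun k hk hk' => by
    rw [mem_range_legShift] at hk hk'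
    omega

variable (N) in
abbrev oneLeg : Fin N ≃ (Fin 1 → Fin N) := (Equiv.funUnique (Fin 1) (Fin N)).symm

variable (N) in
abbrev twoLegs : Fin N × Fin N ≃ (Fin 2 → Fin N) := (piFinTwoEquiv fun _ => Fin N).symm

theorem tensorEmb_eq_place {i : ℕ} (h : i < n) (A : Matrix (Fin N) (Fin N) U) :
    tensorEmb N n i A = place (legShift i h) (Matrix.reindex (oneLeg N) (oneLeg N) A) := by
  ext a b
  simp only [tensorEmb, dif_pos h, place, mem_range_legShift]
  refine if_congr (forall_congr' fun k => imp_congr_left (by omega)) ?_ rfl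
  simp [legShift]

theorem embR_eq_place {i : ℕ} (h : i + 1 < n) (S : Matrix (Fin N × Fin N) (Fin N × Fin N) U) :
    embR N n S i = place (legShift i h) (Matrix.reindex (twoLegs N) (twoLegs N) S) := by
  ext a b
  simp only [embR, dif_pos h, place, mem_range_legShift]
  refine if_congr (forall_congr' fun k => ?_) ?_ rfl
  · exact ⟨fun hk hn => hk (by omega) (by omega), fun hk h₁ h₂ => hk (by omega)⟩
  simp [legShift]

end Place

section Embeddings

variable {U : Type*} [Ring U] {N n : ℕ}

theorem embR_of_le {i : ℕ} (h : ¬ i + 1 < n) (S : Matrix (Fin N × Fin N) (Fin N × Fin N) U) :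
    embR N n S i = 1 := by
  ext a b
  simp only [embR, dif_neg h, Matrix.one_apply]

theorem tensorEmb_of_le {i : ℕ} (h : ¬ i < n) (A : Matrix (Fin N) (Fin N) U) :
    tensorEmb N n i A = 1 := by
  ext a b
  simp only [tensorEmb, dif_neg h, Matrix.one_apply]

theorem embR_mul (S T : Matrix (Fin N × Fin N) (Fin N × Fin N) U) (i : ℕ) :
    embR N n (S * T) i = embR N n S i * embR N n T i := by
  by_cases h : i + 1 < n
  · simp only [embR_eq_place h, place_mul (legShift_injective _), Matrix.reindex_apply,
      Matrix.submatrix_mul_equiv]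
  · simp only [embR_of_le h, mul_one]

theorem embR_one (i : ℕ) : embR N n (1 : Matrix (Fin N × Fin N) (Fin N × Fin N) U) i = 1 := by
  by_cases h : i + 1 < n
  · rw [embR_eq_place h, Matrix.reindex_apply, Matrix.submatrix_one_equiv, place_one]
  · exact embR_of_le h 1

variable (N n U) in
/-- `S ↦ S_i` is multiplicative (but not additive when `i + 1 ≥ n`). -/
def embRHom (i : ℕ) :
    Matrix (Fin N × Fin N) (Fin N × Fin N) U →* Matrix (Fin n → Fin N) (Fin n → Fin N) U where
  toFun S := embR N n S i
  map_one' := embR_one i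
  map_mul' S T := embR_mul S T i

theorem tensorEmb_mul (i : ℕ) (A B : Matrix (Fin N) (Fin N) U) :
    tensorEmb N n i (A * B) = tensorEmb N n i A * tensorEmb N n i B := by
  by_cases h : i < n
  · simp only [tensorEmb_eq_place h, place_mul (legShift_injective _), Matrix.reindex_apply,
      Matrix.submatrix_mul_equiv]
  · simp only [tensorEmb_of_le h, mul_one]

theorem embR_map {V : Type*} [Ring V] (f : U →+* V)
    (S : Matrix (Fin N × Fin N) (Fin N × Fin N) U) (i : ℕ) :
    (embR N n S i).map f = embR N n (S.map f) i := by
  ext a b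
  simp only [Matrix.map_apply, embR]
  split_ifs <;> simp

theorem embR_sub {i : ℕ} (h : i + 1 < n) (S T : Matrix (Fin N × Fin N) (Fin N × Fin N) U) :
    embR N n (S - T) i = embR N n S i - embR N n T i := by
  ext a b
  simp only [embR, dif_pos h, Matrix.sub_apply]
  split_ifs <;> simp

theorem embR_smul {K : Type*} [Monoid K] [DistribMulAction K U] {i : ℕ} (h : i + 1 < n)
    (c : K) (S : Matrix (Fin N × Fin N) (Fin N × Fin N) U) :
    embR N n (c • S) i = c • embR N n S i := by
  ext a b
  simp only [embR, dif_pos h, Matrix.smul_apply]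
  split_ifs <;> simp

theorem place_tensorEmb {m i j : ℕ} (h : i + m ≤ n) (hj : j < m) (A : Matrix (Fin N) (Fin N) U) :
    place (legShift i h) (tensorEmb N m j A) = tensorEmb N n (i + j) A := by
  rw [tensorEmb_eq_place hj, place_place (legShift_injective h), legShift_comp,
    tensorEmb_eq_place]

theorem place_embR {m i j : ℕ} (h : i + m ≤ n) (hj : j + 1 < m)
    (S : Matrix (Fin N × Fin N) (Fin N × Fin N) U) :
    place (legShift i h) (embR N m S j) = embR N n S (i + j) := by
  rw [embR_eq_place hj, place_place (legShift_injective h), legShift_comp, embR_eq_place]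

theorem commute_embR_tensorEmb {i j : ℕ} (hij : j < i ∨ i + 1 < j)
    (S : Matrix (Fin N × Fin N) (Fin N × Fin N) U) (A : Matrix (Fin N) (Fin N) U)
    (hS : ∀ p q a, Commute (S p q) a) :
    Commute (embR N n S i) (tensorEmb N n j A) := by
  by_cases h : i + 1 < n
  · by_cases hj : j < n
    · rw [embR_eq_place h, tensorEmb_eq_place hj]
      refine commute_place_of_disjoint (legShift_injective _) (legShift_injective _) ?_ _ _
        fun _ _ _ _ => hS _ _ _
      exact disjoint_range_legShift _ _ (by omega)
    · rw [tensorEmb_of_le hj]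
      exact Commute.one_right _
  · rw [embR_of_le h]
    exact Commute.one_left _

theorem commute_embR_embR {i j : ℕ} (hij : i + 2 ≤ j)
    (S T : Matrix (Fin N × Fin N) (Fin N × Fin N) U)
    (hST : ∀ p q p' q', Commute (S p q) (T p' q')) :
    Commute (embR N n S i) (embR N n T j) := by
  by_cases hj : j + 1 < n
  · rw [embR_eq_place (by omega : i + 1 < n), embR_eq_place hj]
    refine commute_place_of_disjoint (legShift_injective _) (legShift_injective _) ?_ _ _
      fun _ _ _ _ => hST _ _ _ _
    exact disjoint_range_legShift _ _ (by omega)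
  · rw [embR_of_le hj]
    exact Commute.one_right _

end Embeddings

section BraidSequences

variable {G : Type*} [Group G]

/-- Out of range the generators may be trivial (as `R_i = 1` for `i + 1 ≥ n`), so the braid
relation is only imposed below `n`. -/
structure IsBraidSeq (n : ℕ) (r : ℕ → G) : Prop where
  braid : ∀ i, i + 2 < n → r i * r (i + 1) * r i = r (i + 1) * r i * r (i + 1)
  commute : ∀ i j, i + 2 ≤ j → Commute (r i) (r j)

/-- `jucysMurphy t k = t_{k-1} ⋯ t_1 t_0² t_1 ⋯ t_{k-1}`; for `t i = R_i` this is the paper's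
`J_{k+1}`. -/
def jucysMurphy {M : Type*} [Monoid M] (t : ℕ → M) : ℕ → M
  | 0 => 1
  | k + 1 => t k * jucysMurphy t k * t k

theorem map_jucysMurphy {M M' F : Type*} [Monoid M] [Monoid M'] [FunLike F M M']
    [MonoidHomClass F M M'] (f : F) (t : ℕ → M) (k : ℕ) :
    f (jucysMurphy t k) = jucysMurphy (fun i => f (t i)) k := by
  induction k with
  | zero => exact map_one f
  | succ k ih => simp only [jucysMurphy, map_mul, ih]

theorem val_jucysMurphy {M : Type*} [Monoid M] (t : ℕ → Mˣ) (k : ℕ) :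
    (↑(jucysMurphy t k) : M) = jucysMurphy (fun i => (t i : M)) k :=
  map_jucysMurphy (Units.coeHom M) t k

theorem jucysMurphy_inv (t : ℕ → G) (k : ℕ) :
    (jucysMurphy t k)⁻¹ = jucysMurphy (fun i => (t i)⁻¹) k := by
  induction k with
  | zero => exact inv_one
  | succ k ih => simp only [jucysMurphy, _root_.mul_inv_rev, ih, mul_assoc]

namespace IsBraidSeq

variable {n : ℕ} {r : ℕ → G}

theorem inv (h : IsBraidSeq n r) : IsBraidSeq n fun i => (r i)⁻¹ where
  braid i hi := by simpa only [_root_.mul_inv_rev, mul_assoc] using congrArg (·⁻¹) (h.braid i hi)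
  commute i j hij := (h.commute i j hij).inv_inv

theorem map {H : Type*} [Group H] (h : IsBraidSeq n r) (f : G →* H) :
    IsBraidSeq n fun i => f (r i) where
  braid i hi := by simpa only [map_mul] using congrArg f (h.braid i hi)
  commute i j hij := (h.commute i j hij).map f

theorem commute_jucysMurphy_of_lt (h : IsBraidSeq n r) {k i : ℕ} (hki : k < i) :
    Commute (jucysMurphy r k) (r i) := by
  induction k with
  | zero => exact Commute.one_left _
  | succ k ih =>
    have hk : Commute (r k) (r i) := h.commute k i (by omega)
    exact (hk.mul_left (ih (by omega))).mul_left hk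

theorem jucysMurphy_reflection (h : IsBraidSeq n r) {p : ℕ} (hp : p + 1 < n) :
    r p * jucysMurphy r p * r p * jucysMurphy r p =
      jucysMurphy r p * r p * jucysMurphy r p * r p := by
  induction p with
  | zero => simp [jucysMurphy]
  | succ p ih =>
    set x := r (p + 1)
    set y := r p
    set J := jucysMurphy r p
    have hb : y * x * y = x * y * x := h.braid p hp
    have hxJ : x * J = J * x := (h.commute_jucysMurphy_of_lt (Nat.lt_succ_self p)).eq.symm
    have ih : y * J * y * J = J * y * J * y := ih (by omega)
    show x * (y * J * y) * x * (y * J * y) = y * J * y * x * (y * J * y) * x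
    calc x * (y * J * y) * x * (y * J * y)
        = x * y * J * (y * x * y) * J * y := by group
      _ = x * y * (J * x) * y * (x * J) * y := by rw [hb]; group
      _ = x * y * (x * J) * y * (J * x) * y := by rw [← hxJ]
      _ = x * y * x * (J * y * J) * x * y := by group
      _ = y * x * (y * J * y * J) * x * y := by rw [← hb]; group
      _ = y * x * (J * y * J * y) * x * y := by rw [ih]
      _ = y * x * J * y * J * (y * x * y) := by group
      _ = y * (x * J) * y * (J * x) * y * x := by rw [hb]; group
      _ = y * (J * x) * y * (x * J) * y * x := by rw [hxJ]
      _ = y * J * (x * y * x) * J * y * x := by group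
      _ = y * J * y * x * (y * J * y) * x := by rw [← hb]; group

theorem commute_jucysMurphy (h : IsBraidSeq n r) {k m : ℕ} (hkm : k ≤ m) (hm : m < n) :
    Commute (jucysMurphy r k) (jucysMurphy r m) := by
  induction m with
  | zero => rw [Nat.le_zero.1 hkm]
  | succ m ih =>
    rcases Nat.lt_or_eq_of_le hkm with hkm | rfl
    · rcases Nat.lt_or_eq_of_le (Nat.le_of_lt_succ hkm) with hkm | rfl
      · have hr : Commute (jucysMurphy r k) (r m) := h.commute_jucysMurphy_of_lt hkm
        exact (hr.mul_right (ih hkm.le (by omega))).mul_right hr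
      · simpa only [Commute, SemiconjBy, jucysMurphy, mul_assoc] using
          (h.jucysMurphy_reflection hm).symm
    · exact Commute.refl _

end IsBraidSeq

end BraidSequences

section ConjugationChains

open ConjAct

variable {A : Type*} [Ring A] {n : ℕ} {r : ℕ → Aˣ}

theorem ConjAct.toConjAct_smul_eq_self_iff {u : Aˣ} {a : A} :
    toConjAct u • a = a ↔ Commute (u : A) a := by
  rw [units_smul_def, ofConjAct_toConjAct, Units.mul_inv_eq_iff_eq_mul]
  rfl

/-- `conjChain r x k = r_{k-1} ⋯ r_0 x r_0⁻¹ ⋯ r_{k-1}⁻¹`, the paper's `x_{k̄}` (levels from 0). -/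
def conjChain (r : ℕ → Aˣ) (x : A) : ℕ → A
  | 0 => x
  | k + 1 => toConjAct (r k) • conjChain r x k

theorem conjChain_succ (r : ℕ → Aˣ) (x : A) (k : ℕ) :
    conjChain r x (k + 1) = r k * conjChain r x k * ↑(r k)⁻¹ := by
  rw [conjChain, units_smul_def, ofConjAct_toConjAct]

theorem conjChain_mul (r : ℕ → Aˣ) (x y : A) (k : ℕ) :
    conjChain r (x * y) k = conjChain r x k * conjChain r y k := by
  induction k with
  | zero => rfl
  | succ k ih => rw [conjChain, ih, smul_mul']; rfl

namespace IsBraidSeq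

variable {x : A}

theorem commute_conjChain_of_lt (h : IsBraidSeq n r) (hx : ∀ i, 1 ≤ i → Commute (r i : A) x)
    {k i : ℕ} (hki : k < i) : Commute (r i : A) (conjChain r x k) := by
  induction k with
  | zero => exact hx i (by omega)
  | succ k ih =>
    rw [← toConjAct_smul_eq_self_iff] at ih ⊢
    rw [conjChain, smul_smul, ← map_mul, (h.commute k i (by omega)).eq.symm, map_mul, mul_smul,
      ih (by omega)]

theorem commute_conjChain_of_add_two_le (h : IsBraidSeq n r)
    (hx : ∀ i, 1 ≤ i → Commute (r i : A) x) {k i : ℕ} (hik : i + 2 ≤ k) (hk : k < n) :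
    Commute (r i : A) (conjChain r x k) := by
  rw [← toConjAct_smul_eq_self_iff]
  induction k, hik using Nat.le_induction with
  | base =>
    have hfix := toConjAct_smul_eq_self_iff.2 (h.commute_conjChain_of_lt hx (Nat.lt_succ_self i))
    calc toConjAct (r i) • conjChain r x (i + 2)
        = toConjAct (r i * r (i + 1) * r i) • conjChain r x i := by
          simp only [conjChain, smul_smul, ← map_mul, mul_assoc]
      _ = toConjAct (r (i + 1) * r i) • toConjAct (r (i + 1)) • conjChain r x i := by
          rw [h.braid i hk, smul_smul, ← map_mul, mul_assoc]
      _ = conjChain r x (i + 2) := by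
          rw [hfix]
          simp only [conjChain, smul_smul, ← map_mul]
  | succ k hik ih =>
    rw [conjChain, smul_smul, ← map_mul, (h.commute i k hik).eq, map_mul, mul_smul,
      ih (by omega)]

end IsBraidSeq

end ConjugationChains

section Capelli

open ConjAct

theorem List.prod_map_reverse_range_succ {M : Type*} [Monoid M] (f : ℕ → M) (m : ℕ) :
    ((List.range (m + 1)).reverse.map f).prod = f m * ((List.range m).reverse.map f).prod := by
  simp [List.range_succ]

/-- The induction step of `IsBraidSeq.capelli_step` in an arbitrary ring, with `r = R_m`,
`s = R_m⁻¹`, `y = D_m`, `Dp = Δ_m`, `xm = M_m`, `X = F_m`, `j = J_m⁻¹` and primes for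
level `m + 1`. -/
theorem capelli_step_of_relations {A : Type*} [Ring A] {r s y Dp xm xm' X X' j : A}
    (hrs : r * s = 1) (hsr : s * r = 1) (hDr : Commute Dp r) (hDs : Commute Dp s)
    (hX : X' = r * X * s - j * s) (hxm : xm' = r * xm * s)
    (hcross : y * xm' = s + xm' * y * s * s) (hre : s * y * s * y = y * s * y * s)
    (ih : Dp * X = xm * y * Dp * j) :
    y * Dp * X' = xm' * (r * y * s) * (y * Dp) * (s * j * s) := by
  have hyr : y * r * xm = 1 + xm' * y * s :=
    calc y * r * xm = y * r * xm * (s * r) := by rw [hsr, mul_one]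
      _ = y * xm' * r := by rw [hxm]; noncomm_ring
      _ = s * r + xm' * y * s * (s * r) := by rw [hcross]; noncomm_ring
      _ = 1 + xm' * y * s := by rw [hsr, mul_one]
  calc y * Dp * X' = y * (Dp * r) * X * s - y * Dp * j * s := by rw [hX]; noncomm_ring
    _ = y * r * (Dp * X) * s - y * Dp * j * s := by rw [hDr.eq]; noncomm_ring
    _ = y * r * xm * y * Dp * j * s - y * Dp * j * s := by rw [ih]; noncomm_ring
    _ = xm' * (r * s) * y * s * y * Dp * j * s := by rw [hyr, hrs]; noncomm_ring
    _ = xm' * r * (s * y * s * y) * Dp * j * s := by noncomm_ring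
    _ = xm' * r * y * s * y * (s * Dp) * j * s := by rw [hre]; noncomm_ring
    _ = xm' * (r * y * s) * (y * Dp) * (s * j * s) := by rw [← hDs.eq]; noncomm_ring

variable {A K : Type*} [Ring A] [CommSemiring K] [Algebra K A] {n : ℕ} {r : ℕ → Aˣ}

/-- The `k`-th factor `x_{k̄} + c (J_k⁻¹ - 1)` of the Capelli product, with `J_k⁻¹` written as
the Jucys–Murphy element of the inverse generators. -/
def capelliFactor (r : ℕ → Aˣ) (c : K) (x : A) (k : ℕ) : A :=
  conjChain r x k + c • ((jucysMurphy (fun i => (r i)⁻¹) k : Aˣ) - 1 : A)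

theorem capelliFactor_succ {c t : K} (hct : c * t = 1) (x : A) {m : ℕ}
    (hecke : (r m : A) - ↑(r m)⁻¹ = t • 1) :
    capelliFactor r c x (m + 1) = r m * capelliFactor r c x m * ↑(r m)⁻¹ -
      (jucysMurphy (fun i => (r i)⁻¹) m : Aˣ) * ↑(r m)⁻¹ := by
  set R : A := ↑(r m)
  set S : A := ↑(r m)⁻¹
  set J : A := ↑(jucysMurphy (fun i => (r i)⁻¹) m)
  have hRS : R * S = 1 := Units.mul_inv _
  have hSJS : S * J * S = R * J * S - t • (J * S) :=
    calc S * J * S = R * (J * S) - (R - S) * (J * S) := by noncomm_ring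
      _ = R * J * S - t • (J * S) := by rw [hecke, smul_one_mul, mul_assoc]
  simp only [capelliFactor, conjChain_succ, jucysMurphy, Units.val_mul]
  change R * _ * S + c • (S * J * S - 1) = R * (_ + c • (J - 1)) * S - J * S
  rw [hSJS]
  simp only [mul_add, add_mul, mul_sub, sub_mul, smul_sub, mul_smul_comm, smul_mul_assoc,
    smul_smul, hct, one_smul, mul_one, hRS]
  abel

namespace IsBraidSeq

variable {x y : A} {m : ℕ}

theorem smul_conjChain_self (h : IsBraidSeq n r) (hx : ∀ i, 1 ≤ i → Commute (r i : A) x) :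
    toConjAct (r m * r (m + 1)) • conjChain r x m = conjChain r x (m + 1) := by
  rw [map_mul, mul_smul,
    toConjAct_smul_eq_self_iff.2 (h.commute_conjChain_of_lt hx (Nat.lt_succ_self m))]
  rfl

theorem smul_conjChain_succ (h : IsBraidSeq n r) (hx : ∀ i, 1 ≤ i → Commute (r i : A) x)
    (hm : m + 2 < n) :
    toConjAct (r m * r (m + 1)) • conjChain r x (m + 1) = conjChain r x (m + 2) := by
  rw [map_mul, mul_smul]
  exact toConjAct_smul_eq_self_iff.2 (h.commute_conjChain_of_add_two_le hx le_rfl hm)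

theorem smul_inv (h : IsBraidSeq n r) (hm : m + 2 < n) :
    toConjAct (r m * r (m + 1)) • (↑(r m)⁻¹ : A) = ↑(r (m + 1))⁻¹ := by
  have hb := h.braid m hm
  have : r m * r (m + 1) * (r m)⁻¹ * (r m * r (m + 1))⁻¹ = (r (m + 1))⁻¹ :=
    calc r m * r (m + 1) * (r m)⁻¹ * (r m * r (m + 1))⁻¹
        = (r (m + 1))⁻¹ * (r (m + 1) * r m * r (m + 1)) * (r m)⁻¹ * (r (m + 1))⁻¹ *
            (r m)⁻¹ := by group
      _ = (r (m + 1))⁻¹ := by rw [← hb]; group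
  rw [units_smul_def, ofConjAct_toConjAct, ← Units.val_mul, ← Units.val_mul, this]

theorem cross_relation (h : IsBraidSeq n r) (hx : ∀ i, 1 ≤ i → Commute (r i : A) x)
    (hy : ∀ i, 1 ≤ i → Commute (r i : A) y)
    (h₀ : 1 < n → y * conjChain r x 1 =
      ↑(r 0)⁻¹ + conjChain r x 1 * y * ↑(r 0)⁻¹ * ↑(r 0)⁻¹) (hm : m + 1 < n) :
    conjChain r y m * conjChain r x (m + 1) =
      ↑(r m)⁻¹ + conjChain r x (m + 1) * conjChain r y m * ↑(r m)⁻¹ * ↑(r m)⁻¹ := by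
  induction m with
  | zero => exact h₀ hm
  | succ m ih =>
    simpa only [smul_add, smul_mul', h.smul_conjChain_self hy, h.smul_conjChain_succ hx hm,
      h.smul_inv hm] using congrArg (toConjAct (r m * r (m + 1)) • ·) (ih (by omega))

theorem reflection_relation (h : IsBraidSeq n r) (hy : ∀ i, 1 ≤ i → Commute (r i : A) y)
    (h₀ : 1 < n → ↑(r 0)⁻¹ * y * ↑(r 0)⁻¹ * y = y * ↑(r 0)⁻¹ * y * ↑(r 0)⁻¹)
    (hm : m + 1 < n) :
    ↑(r m)⁻¹ * conjChain r y m * ↑(r m)⁻¹ * conjChain r y m =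
      conjChain r y m * ↑(r m)⁻¹ * conjChain r y m * ↑(r m)⁻¹ := by
  induction m with
  | zero => exact h₀ hm
  | succ m ih =>
    simpa only [smul_mul', h.smul_conjChain_self hy, h.smul_inv hm] using
      congrArg (toConjAct (r m * r (m + 1)) • ·) (ih (by omega))

theorem commute_jucysMurphy_conjChain (h : IsBraidSeq n r)
    (hx : ∀ i, 1 ≤ i → Commute (r i : A) x) {k : ℕ} (hkm : k < m) (hm : m < n) :
    Commute (↑(jucysMurphy (fun i => (r i)⁻¹) k) : A) (conjChain r x m) := by
  induction k with
  | zero => exact Commute.one_left _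
  | succ k ih =>
    have hs := (h.commute_conjChain_of_add_two_le hx (by omega : k + 2 ≤ m) hm).units_inv_left
    simp only [jucysMurphy, Units.val_mul]
    exact (hs.mul_left (ih (by omega))).mul_left hs

variable {c t : K}

theorem capelli_step (h : IsBraidSeq n r) (hct : c * t = 1)
    (hecke : ∀ i, i + 1 < n → (r i : A) - ↑(r i)⁻¹ = t • 1)
    (hx : ∀ i, 1 ≤ i → Commute (r i : A) x) (hy : ∀ i, 1 ≤ i → Commute (r i : A) y)
    (hcross : 1 < n → y * conjChain r x 1 =
      ↑(r 0)⁻¹ + conjChain r x 1 * y * ↑(r 0)⁻¹ * ↑(r 0)⁻¹)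
    (hre : 1 < n → ↑(r 0)⁻¹ * y * ↑(r 0)⁻¹ * y = y * ↑(r 0)⁻¹ * y * ↑(r 0)⁻¹)
    (hm : m < n) :
    ((List.range m).reverse.map (conjChain r y)).prod * capelliFactor r c (x * y) m =
      conjChain r x m * conjChain r y m * ((List.range m).reverse.map (conjChain r y)).prod *
        ↑(jucysMurphy (fun i => (r i)⁻¹) m) := by
  induction m with
  | zero => simp [capelliFactor, jucysMurphy, conjChain_mul]
  | succ m ih =>
    have hDr : ∀ k ∈ (List.range m).reverse.map (conjChain r y), Commute k (r m : A) := by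
      simp only [List.mem_map, List.mem_reverse, List.mem_range]
      rintro _ ⟨k, hk, rfl⟩
      exact (h.commute_conjChain_of_lt hy hk).symm
    rw [List.prod_map_reverse_range_succ, conjChain_succ r y, jucysMurphy, Units.val_mul,
      Units.val_mul]
    exact capelli_step_of_relations (Units.mul_inv _) (Units.inv_mul _)
      (Commute.list_prod_left _ _ hDr)
      (Commute.list_prod_left _ _ fun k hk => (hDr k hk).units_inv_right)
      (capelliFactor_succ hct _ (hecke m hm)) (conjChain_succ r x m)
      (h.cross_relation hx hy hcross hm) (h.reflection_relation hy hre hm) (ih (by omega))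

theorem capelli_identity (h : IsBraidSeq n r) (hct : c * t = 1)
    (hecke : ∀ i, i + 1 < n → (r i : A) - ↑(r i)⁻¹ = t • 1)
    (hx : ∀ i, 1 ≤ i → Commute (r i : A) x) (hy : ∀ i, 1 ≤ i → Commute (r i : A) y)
    (hcross : 1 < n → y * conjChain r x 1 =
      ↑(r 0)⁻¹ + conjChain r x 1 * y * ↑(r 0)⁻¹ * ↑(r 0)⁻¹)
    (hre : 1 < n → ↑(r 0)⁻¹ * y * ↑(r 0)⁻¹ * y = y * ↑(r 0)⁻¹ * y * ↑(r 0)⁻¹)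
    (hm : m ≤ n) :
    ((List.range m).map (capelliFactor r c (x * y))).prod =
      ((List.range m).map (conjChain r x)).prod *
        ((List.range m).reverse.map (conjChain r y)).prod *
        ((List.range m).map fun k => (↑(jucysMurphy (fun i => (r i)⁻¹) k) : A)).prod := by
  induction m with
  | zero => simp
  | succ m ih =>
    set j : ℕ → A := fun k => ↑(jucysMurphy (fun i => (r i)⁻¹) k)
    set F := capelliFactor r c (x * y) m
    have hj : ∀ k ∈ List.range m, Commute (j k) (j m) := fun k hk =>
      (h.inv.commute_jucysMurphy (List.mem_range.1 hk).le (by omega)).units_val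
    have hjF : ∀ k ∈ List.range m, Commute (j k) F := fun k hk =>
      (h.commute_jucysMurphy_conjChain (fun i hi => (hx i hi).mul_right (hy i hi))
        (List.mem_range.1 hk) (by omega)).add_right
        (((hj k hk).sub_right (Commute.one_right _)).smul_right c)
    set Mp := ((List.range m).map (conjChain r x)).prod
    set Dp := ((List.range m).reverse.map (conjChain r y)).prod
    set Jp := ((List.range m).map j).prod
    have hJj : Commute Jp (j m) := Commute.list_prod_left _ _ (List.forall_mem_map.2 hj)
    have hJF : Commute Jp F := Commute.list_prod_left _ _ (List.forall_mem_map.2 hjF)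
    rw [List.prod_range_succ, List.prod_range_succ, List.prod_range_succ,
      List.prod_map_reverse_range_succ, ih (by omega)]
    calc Mp * Dp * Jp * F = Mp * (Dp * F) * Jp := by rw [mul_assoc _ Jp, hJF.eq]; noncomm_ring
      _ = Mp * (conjChain r x m * conjChain r y m * Dp * j m) * Jp := by
          rw [h.capelli_step hct hecke hx hy hcross hre (by omega)]
      _ = Mp * conjChain r x m * (conjChain r y m * Dp) * (Jp * j m) := by
          rw [hJj.eq]; noncomm_ring

end IsBraidSeq

end Capelli

section EmbeddedRMatrix

theorem Matrix.map_smul_sub_one {ι K W : Type*} [Fintype ι] [DecidableEq ι] [CommRing K]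
    [Ring W] [Algebra K W] (c : K) (X : Matrix ι ι K) :
    (c • (X - 1)).map (algebraMap K W) = c • (X.map (algebraMap K W) - 1) := by
  change (Algebra.ofId K W).mapMatrix _ = _
  rw [map_smul, map_sub, map_one]
  rfl

variable {N n : ℕ} {W : Type*} [Ring W]

theorem Abar_eq_conjChain {Rw Sw : Matrix (Fin N × Fin N) (Fin N × Fin N) W}
    {r : ℕ → (Matrix (Fin n → Fin N) (Fin n → Fin N) W)ˣ}
    (hr : ∀ i, (r i : Matrix _ _ W) = embR N n Rw i) (hs : ∀ i, ↑(r i)⁻¹ = embR N n Sw i)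
    (A : Matrix (Fin N) (Fin N) W) :
    Abar N n Rw Sw A = conjChain r (tensorEmb N n 0 A) := by
  funext k
  induction k with
  | zero => rfl
  | succ k ih => rw [Abar, conjChain_succ, ih, hr, hs]

theorem cross_relation_of_two_legs {Rw Sw : Matrix (Fin N × Fin N) (Fin N × Fin N) W}
    {M D : Matrix (Fin N) (Fin N) W} (hn : 1 < n)
    (h : tensorEmb N 2 0 D * Abar N 2 Rw Sw M 1 =
      embR N 2 Sw 0 + Abar N 2 Rw Sw M 1 * tensorEmb N 2 0 D * embR N 2 Sw 0 * embR N 2 Sw 0) :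
    tensorEmb N n 0 D * Abar N n Rw Sw M 1 =
      embR N n Sw 0 + Abar N n Rw Sw M 1 * tensorEmb N n 0 D * embR N n Sw 0 * embR N n Sw 0 := by
  have h' := congrArg (placeHom (legShift_injective (by omega : 0 + 2 ≤ n))) h
  simp only [Abar, map_add, map_mul, placeHom_apply, place_embR _ (by omega : 0 + 1 < 2),
    place_tensorEmb _ (by omega : 0 < 2), add_zero] at h'
  exact h'

theorem reflection_relation_of_two_legs {S : Matrix (Fin N × Fin N) (Fin N × Fin N) W}
    {D : Matrix (Fin N) (Fin N) W} (hn : 1 < n)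
    (h : embR N 2 S 0 * tensorEmb N 2 0 D * embR N 2 S 0 * tensorEmb N 2 0 D =
      tensorEmb N 2 0 D * embR N 2 S 0 * tensorEmb N 2 0 D * embR N 2 S 0) :
    embR N n S 0 * tensorEmb N n 0 D * embR N n S 0 * tensorEmb N n 0 D =
      tensorEmb N n 0 D * embR N n S 0 * tensorEmb N n 0 D * embR N n S 0 := by
  have h' := congrArg (placeHom (legShift_injective (by omega : 0 + 2 ≤ n))) h
  simp only [map_mul, placeHom_apply, place_embR _ (by omega : 0 + 1 < 2),
    place_tensorEmb _ (by omega : 0 < 2), add_zero] at h'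
  exact h'

variable [Algebra ℂ W] (R : (Matrix (Fin N × Fin N) (Fin N × Fin N) ℂ)ˣ)

variable (W n) in
def embRUnit (i : ℕ) : (Matrix (Fin n → Fin N) (Fin n → Fin N) W)ˣ :=
  Units.map (Algebra.ofId ℂ W).mapMatrix.toMonoidHom (Units.map (embRHom ℂ N n i) R)

theorem val_embRUnit (i : ℕ) :
    (embRUnit n W R i : Matrix (Fin n → Fin N) (Fin n → Fin N) W) =
      embR N n ((R : Matrix _ _ ℂ).map (algebraMap ℂ W)) i :=
  embR_map _ _ _

theorem val_inv_embRUnit (i : ℕ) :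
    (↑(embRUnit n W R i)⁻¹ : Matrix (Fin n → Fin N) (Fin n → Fin N) W) =
      embR N n ((↑R⁻¹ : Matrix _ _ ℂ).map (algebraMap ℂ W)) i :=
  embR_map _ _ _

theorem isBraidSeq_embRUnit
    (hbraid : embR N 3 (R : Matrix _ _ ℂ) 0 * embR N 3 (R : Matrix _ _ ℂ) 1 *
        embR N 3 (R : Matrix _ _ ℂ) 0 =
      embR N 3 (R : Matrix _ _ ℂ) 1 * embR N 3 (R : Matrix _ _ ℂ) 0 *
        embR N 3 (R : Matrix _ _ ℂ) 1) :
    IsBraidSeq n (embRUnit n W R) := by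
  have hℂ : IsBraidSeq n fun i => Units.map (embRHom ℂ N n i) R :=
    { braid := fun i hi => Units.ext <| by
        have h := congrArg (placeHom (legShift_injective (by omega : i + 3 ≤ n))) hbraid
        simp only [map_mul, placeHom_apply, place_embR _ (by omega : 0 + 1 < 3),
          place_embR _ (by omega : 1 + 1 < 3), add_zero] at h
        exact h
      commute := fun i j hij =>
        Units.ext <| commute_embR_embR hij _ _ fun _ _ _ _ => Commute.all _ _ }
  exact hℂ.map _

theorem embRUnit_sub_inv {t : ℂ}
    (hR : (R : Matrix (Fin N × Fin N) (Fin N × Fin N) ℂ) - ↑R⁻¹ = t • 1) {i : ℕ} (hi : i + 1 < n) :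
    (embRUnit n W R i : Matrix (Fin n → Fin N) (Fin n → Fin N) W) - ↑(embRUnit n W R i)⁻¹ =
      t • 1 := by
  change (Algebra.ofId ℂ W).mapMatrix (embR N n (R : Matrix _ _ ℂ) i) -
    (Algebra.ofId ℂ W).mapMatrix (embR N n (↑R⁻¹ : Matrix _ _ ℂ) i) = t • 1
  rw [← map_sub, ← embR_sub hi, hR, embR_smul hi, embR_one, map_smul, map_one]

theorem commute_embRUnit_tensorEmb {i : ℕ} (hi : 1 ≤ i) (A : Matrix (Fin N) (Fin N) W) :
    Commute (embRUnit n W R i : Matrix (Fin n → Fin N) (Fin n → Fin N) W) (tensorEmb N n 0 A) := by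
  rw [val_embRUnit]
  exact commute_embR_tensorEmb (Or.inl hi) _ _ fun _ _ _ => Algebra.commutes _ _

theorem map_inv_Jm (k : ℕ) :
    ((Jm N n (R : Matrix (Fin N × Fin N) (Fin N × Fin N) ℂ) k)⁻¹).map (algebraMap ℂ W) =
      ↑(jucysMurphy (fun i => (embRUnit n W R i)⁻¹) k) := by
  have hJ : Jm N n (R : Matrix (Fin N × Fin N) (Fin N × Fin N) ℂ) k =
      ↑(jucysMurphy (fun i => Units.map (embRHom ℂ N n i) R) k) := by
    induction k with
    | zero => rfl
    | succ k ih => rw [Jm, ih, jucysMurphy, Units.val_mul, Units.val_mul]; rfl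
  rw [hJ, ← Matrix.coe_units_inv, jucysMurphy_inv, val_jucysMurphy, val_jucysMurphy]
  exact map_jucysMurphy (Algebra.ofId ℂ W).mapMatrix _ k

end EmbeddedRMatrix

theorem sub_inv_ne_zero_of_sq_ne_one {F : Type*} [Field F] {q : F} (hq0 : q ≠ 0)
    (hq : q ^ 2 ≠ 1) : q - q⁻¹ ≠ 0 := by
  rw [sub_ne_zero]
  intro h
  apply hq
  rw [sq]
  nth_rw 2 [h]
  exact mul_inv_cancel₀ hq0

theorem mul_sub_smul_one_of_hecke {A K : Type*} [Ring A] [CommSemiring K] [Algebra K A]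
    {R : A} {t : K} (hHecke : R * R = 1 + t • R) : R * (R - t • 1) = 1 := by
  rw [mul_sub, mul_smul_comm, mul_one, hHecke, add_sub_cancel_right]

theorem universal_quantum_matrix_Capelli_general (N : ℕ) (q : ℂ)
    (hq0 : q ≠ 0) (hq : ∀ k : ℕ, 1 ≤ k → q ^ k ≠ 1)
    (R : Matrix (Fin N × Fin N) (Fin N × Fin N) ℂ)
    (hbraid : embR N 3 R 0 * embR N 3 R 1 * embR N 3 R 0 =
      embR N 3 R 1 * embR N 3 R 0 * embR N 3 R 1)
    (hHecke : R * R = 1 + (q - q⁻¹) • R)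
    (W : Type*) [Ring W] [Algebra ℂ W]
    (M D : Matrix (Fin N) (Fin N) W)
    (hD : embR N 2 (R⁻¹.map (algebraMap ℂ W)) 0 * tensorEmb N 2 0 D *
        embR N 2 (R⁻¹.map (algebraMap ℂ W)) 0 * tensorEmb N 2 0 D =
      tensorEmb N 2 0 D * embR N 2 (R⁻¹.map (algebraMap ℂ W)) 0 *
        tensorEmb N 2 0 D * embR N 2 (R⁻¹.map (algebraMap ℂ W)) 0)
    (hcross : tensorEmb N 2 0 D *
        Abar N 2 (R.map (algebraMap ℂ W)) (R⁻¹.map (algebraMap ℂ W)) M 1 =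
      embR N 2 (R⁻¹.map (algebraMap ℂ W)) 0 +
        Abar N 2 (R.map (algebraMap ℂ W)) (R⁻¹.map (algebraMap ℂ W)) M 1 *
          tensorEmb N 2 0 D * embR N 2 (R⁻¹.map (algebraMap ℂ W)) 0 *
          embR N 2 (R⁻¹.map (algebraMap ℂ W)) 0)
    (n : ℕ) :
    ((List.range n).map (fun k =>
        Abar N n (R.map (algebraMap ℂ W)) (R⁻¹.map (algebraMap ℂ W)) (M * D) k +
          ((q - q⁻¹)⁻¹ • ((Jm N n R k)⁻¹ - 1)).map (algebraMap ℂ W))).prod =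
    ((List.range n).map (fun k =>
        Abar N n (R.map (algebraMap ℂ W)) (R⁻¹.map (algebraMap ℂ W)) M k)).prod *
      ((List.range n).reverse.map (fun k =>
        Abar N n (R.map (algebraMap ℂ W)) (R⁻¹.map (algebraMap ℂ W)) D k)).prod *
      ((List.range n).map (fun k => ((Jm N n R k)⁻¹).map (algebraMap ℂ W))).prod := by
  have ht : q - q⁻¹ ≠ 0 := sub_inv_ne_zero_of_sq_ne_one hq0 (hq 2 one_le_two)
  have hRR := mul_sub_smul_one_of_hecke hHecke
  have hR : R - R⁻¹ = (q - q⁻¹) • 1 := by rw [Matrix.inv_eq_right_inv hRR, sub_sub_cancel]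
  obtain ⟨R, rfl⟩ : IsUnit R := ⟨⟨R, _, hRR, mul_eq_one_comm.1 hRR⟩, rfl⟩
  rw [← Matrix.coe_units_inv] at hD hcross hR ⊢
  have hr := val_embRUnit (n := n) (W := W) R
  have hs := val_inv_embRUnit (n := n) (W := W) R
  have hcross' := fun hn : 1 < n => cross_relation_of_two_legs hn hcross
  have hD' := fun hn : 1 < n => reflection_relation_of_two_legs hn hD
  simp only [Abar_eq_conjChain hr hs, ← hs] at hcross' hD' ⊢
  simp only [Matrix.map_smul_sub_one, map_inv_Jm, tensorEmb_mul]
  exact (isBraidSeq_embRUnit R hbraid).capelli_identity (inv_mul_cancel₀ ht)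
    (fun i hi => embRUnit_sub_inv R hR hi) (fun i hi => commute_embRUnit_tensorEmb R hi M)
    (fun i hi => commute_embRUnit_tensorEmb R hi D) hcross' hD' le_rfl

/-- universal quantum matrix Capelli identity: for a
skew-invertible Hecke `R`-matrix with parameter `q` (`qᵏ ≠ 1` for `k ≥ 1`) and
matrices `M`, `D` over a unital ℂ-algebra `W` satisfying the Reflection
Equation, the `R⁻¹`-Reflection Equation and the cross relations, with
`L̂ = MD`, one has for every `n ≥ 1` in `Mat_N(ℂ)^{⊗n} ⊗ W`:
`L̂_{1̄}(L̂_{2̄} + (J₂⁻¹−1)/(q−q⁻¹))⋯(L̂_{n̄} + (Jₙ⁻¹−1)/(q−q⁻¹))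
  = M_{1̄}⋯M_{n̄} D_{n̄}⋯D_{1̄} J₁⁻¹⋯Jₙ⁻¹`. -/
theorem universal_quantum_matrix_Capelli (N : ℕ) (hN : 1 ≤ N) (q : ℂ)
    (hq0 : q ≠ 0) (hq : ∀ k : ℕ, 1 ≤ k → q ^ k ≠ 1)
    (R : Matrix (Fin N × Fin N) (Fin N × Fin N) ℂ)
    (hbraid : embR N 3 R 0 * embR N 3 R 1 * embR N 3 R 0 =
      embR N 3 R 1 * embR N 3 R 0 * embR N 3 R 1)
    (hHecke : R * R = 1 + (q - q⁻¹) • R)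
    (hskew : ∃ Ψ : Matrix (Fin N × Fin N) (Fin N × Fin N) ℂ,
      ptr2 N (embR N 3 R 0 * embR N 3 Ψ 1) = swap13 N ∧
      ptr2 N (embR N 3 Ψ 0 * embR N 3 R 1) = swap13 N)
    (W : Type*) [Ring W] [Algebra ℂ W]
    (M D : Matrix (Fin N) (Fin N) W)
    (hM : embR N 2 (R.map (algebraMap ℂ W)) 0 * tensorEmb N 2 0 M *
        embR N 2 (R.map (algebraMap ℂ W)) 0 * tensorEmb N 2 0 M =
      tensorEmb N 2 0 M * embR N 2 (R.map (algebraMap ℂ W)) 0 *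
        tensorEmb N 2 0 M * embR N 2 (R.map (algebraMap ℂ W)) 0)
    (hD : embR N 2 (R⁻¹.map (algebraMap ℂ W)) 0 * tensorEmb N 2 0 D *
        embR N 2 (R⁻¹.map (algebraMap ℂ W)) 0 * tensorEmb N 2 0 D =
      tensorEmb N 2 0 D * embR N 2 (R⁻¹.map (algebraMap ℂ W)) 0 *
        tensorEmb N 2 0 D * embR N 2 (R⁻¹.map (algebraMap ℂ W)) 0)
    (hcross : tensorEmb N 2 0 D *
        Abar N 2 (R.map (algebraMap ℂ W)) (R⁻¹.map (algebraMap ℂ W)) M 1 =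
      embR N 2 (R⁻¹.map (algebraMap ℂ W)) 0 +
        Abar N 2 (R.map (algebraMap ℂ W)) (R⁻¹.map (algebraMap ℂ W)) M 1 *
          tensorEmb N 2 0 D * embR N 2 (R⁻¹.map (algebraMap ℂ W)) 0 *
          embR N 2 (R⁻¹.map (algebraMap ℂ W)) 0)
    (n : ℕ) (hn : 1 ≤ n) :
    ((List.range n).map (fun k =>
        Abar N n (R.map (algebraMap ℂ W)) (R⁻¹.map (algebraMap ℂ W)) (M * D) k +
          ((q - q⁻¹)⁻¹ • ((Jm N n R k)⁻¹ - 1)).map (algebraMap ℂ W))).prod =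
    ((List.range n).map (fun k =>
        Abar N n (R.map (algebraMap ℂ W)) (R⁻¹.map (algebraMap ℂ W)) M k)).prod *
      ((List.range n).reverse.map (fun k =>
        Abar N n (R.map (algebraMap ℂ W)) (R⁻¹.map (algebraMap ℂ W)) D k)).prod *
      ((List.range n).map (fun k => ((Jm N n R k)⁻¹).map (algebraMap ℂ W))).prod :=
  universal_quantum_matrix_Capelli_general N q hq0 hq R hbraid hHecke W M D hD hcross n
end
end
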